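/- Let v ∈ ℝ^d be a nonzero vector, β > 0, and let ξ ~ N(0, σ² I_d) with σ = γβ for γ > 0. Then P(⟨v, ξ⟩ ≥ β‖v‖_∞) ≥ (1/√(2π)) · (γ/(dγ² + 1)) · (1 − 1/(2γ²)). -/

import Mathlib

/-!
`⟨v, ξ⟩` is a centred Gaussian with variance `σ²‖v‖₂²`, so the probability is the standard
Gaussian tail at `u = ‖v‖_∞ / (γ‖v‖₂)`, and `1/(γ√d) ≤ u ≤ 1/γ`. Integrating
`(1 + 1/x²) e^{-x²/2} = (-e^{-x²/2}/x)'` over `(u, ∞)` and bounding `1 + 1/x² ≤ 1 + 1/u²` there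
gives the Mills-ratio bound `P(Z ≥ u) ≥ φ(u) · u/(u² + 1)`; then
`u/(u² + 1) = 1/(u + 1/u) ≥ 1/(1/γ + γd) = γ/(dγ² + 1)` and `e^{-u²/2} ≥ 1 - u²/2 ≥ 1 - 1/(2γ²)`.
-/

open MeasureTheory ProbabilityTheory Real Filter Topology
open scoped ENNReal NNReal

theorem tendsto_exp_neg_sq_div_two_div_atTop :
    Tendsto (fun x : ℝ ↦ exp (-x ^ 2 / 2) / x) atTop (𝓝 0) := by
  have hsq : Tendsto (fun x : ℝ ↦ -x ^ 2 / 2) atTop atBot := by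
    simp_rw [neg_div]
    exact tendsto_neg_atTop_atBot.comp ((tendsto_pow_atTop two_ne_zero).atTop_div_const two_pos)
  simpa [div_eq_mul_inv] using (tendsto_exp_atBot.comp hsq).mul tendsto_inv_atTop_zero

theorem mul_exp_le_integral_Ioi_exp_neg_sq_div_two {u : ℝ} (hu : 0 < u) :
    u / (u ^ 2 + 1) * exp (-u ^ 2 / 2) ≤ ∫ x in Set.Ioi u, exp (-x ^ 2 / 2) := by
  have hderiv : ∀ x ∈ Set.Ici u,
      HasDerivAt (fun x ↦ -(exp (-x ^ 2 / 2) / x)) ((1 + 1 / x ^ 2) * exp (-x ^ 2 / 2)) x := by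
    intro x hx
    have hx : x ≠ 0 := (hu.trans_le hx).ne'
    have h := (((hasDerivAt_pow 2 x).fun_neg.div_const 2).exp.fun_div (hasDerivAt_id' x) hx).fun_neg
    refine h.congr_deriv ?_
    field_simp
    ring
  have hnonneg : ∀ x ∈ Set.Ioi u, 0 ≤ (1 + 1 / x ^ 2) * exp (-x ^ 2 / 2) :=
    fun x _ ↦ by positivity
  have hlim : Tendsto (fun x ↦ -(exp (-x ^ 2 / 2) / x)) atTop (𝓝 0) := by
    simpa using tendsto_exp_neg_sq_div_two_div_atTop.neg
  have hFTC : ∫ x in Set.Ioi u, (1 + 1 / x ^ 2) * exp (-x ^ 2 / 2) = exp (-u ^ 2 / 2) / u := by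
    rw [integral_Ioi_of_hasDerivAt_of_nonneg' hderiv hnonneg hlim]
    ring
  have hint : IntegrableOn (fun x : ℝ ↦ exp (-x ^ 2 / 2)) (Set.Ioi u) := by
    have h := integrable_exp_neg_mul_sq (b := 1 / 2) (by norm_num)
    refine (h.congr (ae_of_all _ fun x ↦ ?_)).integrableOn
    ring_nf
  have hmono : ∫ x in Set.Ioi u, (1 + 1 / x ^ 2) * exp (-x ^ 2 / 2) ≤
      ∫ x in Set.Ioi u, (1 + 1 / u ^ 2) * exp (-x ^ 2 / 2) := by
    refine setIntegral_mono_on (integrableOn_Ioi_deriv_of_nonneg' hderiv hnonneg hlim)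
      (hint.const_mul _) measurableSet_Ioi fun x hx ↦ ?_
    have : 1 / x ^ 2 ≤ 1 / u ^ 2 := by gcongr; exact le_of_lt hx
    gcongr
  rw [integral_const_mul, hFTC] at hmono
  calc u / (u ^ 2 + 1) * exp (-u ^ 2 / 2) = (exp (-u ^ 2 / 2) / u) / (1 + 1 / u ^ 2) := by
        field_simp
    _ ≤ ∫ x in Set.Ioi u, exp (-x ^ 2 / 2) := by
        rw [div_le_iff₀ (by positivity), mul_comm]
        exact hmono

namespace ProbabilityTheory

variable {Ω ι : Type*} [MeasurableSpace Ω] {P : Measure Ω} [IsProbabilityMeasure P]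
  {X : ι → Ω → ℝ} {μ : ι → ℝ} {V : ι → ℝ≥0}

theorem iIndepFun.map_sum_eq_gaussianReal (hX : ∀ i, Measurable (X i)) (hind : iIndepFun X P)
    (hlaw : ∀ i, P.map (X i) = gaussianReal (μ i) (V i)) (s : Finset ι) :
    P.map (fun ω ↦ ∑ i ∈ s, X i ω) = gaussianReal (∑ i ∈ s, μ i) (∑ i ∈ s, V i) := by
  classical
  induction s using Finset.induction_on with
  | empty => simp [Measure.map_const, gaussianReal_zero_var]
  | insert i s hi ih =>
    simp_rw [Finset.sum_insert hi]
    have hindep : IndepFun (X i) (fun ω ↦ ∑ j ∈ s, X j ω) P := by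
      have h := (hind.indepFun_finsetSum_of_notMem hX hi).symm
      rwa [show ∑ j ∈ s, X j = fun ω ↦ ∑ j ∈ s, X j ω from funext fun ω ↦ s.sum_apply ω X] at h
    exact gaussianReal_add_gaussianReal_of_indepFun hindep (hlaw i) ih

theorem iIndepFun.map_weightedSum_eq_gaussianReal (hX : ∀ i, Measurable (X i))
    (hind : iIndepFun X P) (hlaw : ∀ i, P.map (X i) = gaussianReal (μ i) (V i)) (c : ι → ℝ)
    (s : Finset ι) :
    P.map (fun ω ↦ ∑ i ∈ s, c i * X i ω) =
      gaussianReal (∑ i ∈ s, c i * μ i) (∑ i ∈ s, .mk (c i ^ 2) (sq_nonneg _) * V i) := by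
  refine iIndepFun.map_sum_eq_gaussianReal (fun i ↦ (hX i).const_mul (c i))
    (hind.comp _ fun i ↦ measurable_const_mul (c i)) (fun i ↦ ?_) s
  change P.map ((c i * ·) ∘ X i) = _
  rw [← Measure.map_map (measurable_const_mul (c i)) (hX i), hlaw i, gaussianReal_map_const_mul]

theorem gaussianReal_Ici_eq {V : ℝ≥0} (hV : V ≠ 0) (t : ℝ) :
    gaussianReal 0 V (Set.Ici t) = gaussianReal 0 1 (Set.Ici (t / √V)) := by
  have hσ : 0 < √(V : ℝ) := sqrt_pos.2 (NNReal.coe_pos.2 (pos_iff_ne_zero.2 hV))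
  have hmap : (gaussianReal 0 1).map (√(V : ℝ) * ·) = gaussianReal 0 V := by
    rw [gaussianReal_map_const_mul, mul_zero, mul_one]
    congr
    exact sq_sqrt V.coe_nonneg
  rw [← hmap, Measure.map_apply (measurable_const_mul _) measurableSet_Ici]
  congr 1
  ext x
  simp [div_le_iff₀ hσ, mul_comm]

theorem ofReal_le_gaussianReal_Ici {u : ℝ} (hu : 0 < u) :
    ENNReal.ofReal ((√(2 * π))⁻¹ * (u / (u ^ 2 + 1)) * exp (-u ^ 2 / 2)) ≤
      gaussianReal 0 1 (Set.Ici u) := by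
  rw [gaussianReal_apply_eq_integral 0 one_ne_zero, integral_Ici_eq_integral_Ioi]
  refine ENNReal.ofReal_le_ofReal ?_
  simp only [gaussianPDFReal, NNReal.coe_one, mul_one, sub_zero]
  rw [integral_const_mul, mul_assoc]
  gcongr
  exact mul_exp_le_integral_Ioi_exp_neg_sq_div_two hu

end ProbabilityTheory

theorem norm_le_sqrt_sum_sq {ι : Type*} [Fintype ι] (v : ι → ℝ) : ‖v‖ ≤ √(∑ i, v i ^ 2) :=
  (pi_norm_le_iff_of_nonneg (sqrt_nonneg _)).2 fun i ↦ by
    rw [norm_eq_abs, ← sqrt_sq_eq_abs]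
    exact sqrt_le_sqrt (Finset.single_le_sum (fun j _ ↦ sq_nonneg (v j)) (Finset.mem_univ i))

theorem sum_sq_le_card_mul_sq_norm {ι : Type*} [Fintype ι] (v : ι → ℝ) :
    ∑ i, v i ^ 2 ≤ Fintype.card ι * ‖v‖ ^ 2 := by
  calc ∑ i, v i ^ 2 ≤ ∑ _i : ι, ‖v‖ ^ 2 := Finset.sum_le_sum fun i _ ↦ by
        simpa only [norm_eq_abs, sq_abs] using
          pow_le_pow_left₀ (norm_nonneg _) (norm_le_pi_norm v i) 2
    _ = Fintype.card ι * ‖v‖ ^ 2 := by simp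

theorem anticoncentration_const_le {d : ℕ} {γ u : ℝ} (hγ : 0 < γ) (hu : 0 < u) (hγu : γ * u ≤ 1)
    (hd : 1 ≤ d * (γ * u) ^ 2) :
    1 / √(2 * π) * (γ / (d * γ ^ 2 + 1)) * (1 - 1 / (2 * γ ^ 2)) ≤
      (√(2 * π))⁻¹ * (u / (u ^ 2 + 1)) * exp (-u ^ 2 / 2) := by
  rcases le_or_gt (1 - 1 / (2 * γ ^ 2)) 0 with hneg | hpos
  · exact (mul_nonpos_of_nonneg_of_nonpos (by positivity) hneg).trans (by positivity)
  have hfrac : γ / (d * γ ^ 2 + 1) ≤ u / (u ^ 2 + 1) := by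
    rw [div_le_div_iff₀ (by positivity) (by positivity)]
    nlinarith [mul_le_mul_of_nonneg_left hγu (by positivity : (0 : ℝ) ≤ d * (γ * u)), hd]
  have hexp : 1 - 1 / (2 * γ ^ 2) ≤ exp (-u ^ 2 / 2) := by
    have hu2 : u ^ 2 / 2 ≤ 1 / (2 * γ ^ 2) := by
      rw [div_le_div_iff₀ (by norm_num) (by positivity)]
      nlinarith [pow_le_one₀ (n := 2) (mul_pos hγ hu).le hγu]
    calc 1 - 1 / (2 * γ ^ 2) ≤ -u ^ 2 / 2 + 1 := by rw [neg_div]; linarith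
      _ ≤ exp (-u ^ 2 / 2) := add_one_le_exp _
  rw [one_div]
  exact mul_le_mul (mul_le_mul_of_nonneg_left hfrac (by positivity)) hexp hpos.le (by positivity)

/-- For nonzero v ∈ ℝ^d, β > 0 and ξ ~ N(0, σ²I_d) with σ = γβ (γ > 0):
P(⟨v, ξ⟩ ≥ β‖v‖_∞) ≥ (1/√(2π))·(γ/(dγ²+1))·(1 − 1/(2γ²)).
Here ‖v‖ denotes the sup norm on Fin d → ℝ. -/
theorem gaussian_inner_product_anticoncentration
    {Ω : Type*} [MeasurableSpace Ω] (P : Measure Ω) [IsProbabilityMeasure P]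
    (d : ℕ) (v : Fin d → ℝ) (hv : v ≠ 0) (β γ : ℝ) (hβ : 0 < β) (hγ : 0 < γ)
    (ξ : Fin d → Ω → ℝ) (hmeas : ∀ i, Measurable (ξ i))
    (hindep : iIndepFun ξ P)
    (hlaw : ∀ i, Measure.map (ξ i) P = gaussianReal 0 ⟨(γ * β) ^ 2, sq_nonneg _⟩) :
    ENNReal.ofReal ((1 / Real.sqrt (2 * π)) * (γ / (d * γ ^ 2 + 1)) *
        (1 - 1 / (2 * γ ^ 2))) ≤
      P {ω | β * ‖v‖ ≤ ∑ i, v i * ξ i ω} := by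
  set q := ∑ i, v i ^ 2
  set W : ℝ≥0 := ∑ i, .mk (v i ^ 2) (sq_nonneg _) * ⟨(γ * β) ^ 2, sq_nonneg _⟩
  have hlawS : P.map (fun ω ↦ ∑ i, v i * ξ i ω) = gaussianReal 0 W := by
    simpa only [mul_zero, Finset.sum_const_zero] using
      hindep.map_weightedSum_eq_gaussianReal hmeas hlaw v Finset.univ
  have hm : 0 < ‖v‖ := norm_pos_iff.2 hv
  have hq : 0 < √q := hm.trans_le (norm_le_sqrt_sum_sq v)
  have hW : √(W : ℝ) = √q * (γ * β) := by
    rw [← sqrt_sq (by positivity : 0 ≤ γ * β), ← sqrt_mul (sqrt_pos.1 hq).le]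
    simp only [W, q, NNReal.coe_sum, Finset.sum_mul]
    rfl
  have hWpos : 0 < √(W : ℝ) := by rw [hW]; positivity
  set u := β * ‖v‖ / √(W : ℝ)
  have hγu : γ * u = ‖v‖ / √q := by
    simp only [u, hW]
    field_simp
  have hu : 0 < u := div_pos (mul_pos hβ hm) hWpos
  calc ENNReal.ofReal _
      ≤ ENNReal.ofReal ((√(2 * π))⁻¹ * (u / (u ^ 2 + 1)) * exp (-u ^ 2 / 2)) := by
        refine ENNReal.ofReal_le_ofReal (anticoncentration_const_le hγ hu ?_ ?_)
        · rw [hγu, div_le_one hq]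
          exact norm_le_sqrt_sum_sq v
        · rw [hγu, div_pow, sq_sqrt (sqrt_pos.1 hq).le, mul_div_assoc',
            le_div_iff₀ (sqrt_pos.1 hq), one_mul]
          simpa using sum_sq_le_card_mul_sq_norm v
    _ ≤ gaussianReal 0 1 (Set.Ici u) := ofReal_le_gaussianReal_Ici hu
    _ = gaussianReal 0 W (Set.Ici (β * ‖v‖)) :=
        (gaussianReal_Ici_eq (fun h ↦ by simp [h] at hWpos) _).symm
    _ = P {ω | β * ‖v‖ ≤ ∑ i, v i * ξ i ω} := by
        rw [← hlawS, Measure.map_apply (by fun_prop) measurableSet_Ici]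
        rfl
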